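/- Theorem 2 (XLRT achieves bounded regret). Let i ∈ {0,1} be the true demand model and consider a pricing process under model i following the XLRT policy with thresholds η_0, η_1. Set a = (min over k ∈ Fin 3 of I(q i k ‖ q (1−i) k)) − η_i. Then a > 0, and for every horizon T ≥ 1, E[#{t : 1 ≤ t ≤ T, a_t ≠ i}] ≤ 1 + (M − m)²/(2 a²); consequently, for revenues r : Fin 2 → Fin 3 → ℝ with r i i ≥ r i k for all k, the regret Δ_i(T) = T · r i i − E[Σ_{t=1}^T r i (a_t)] is bounded by a constant independent of T. -/

import Mathlib

open MeasureTheory ProbabilityTheory Finset Real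

noncomputable section

/-- Probability of outcome `y ∈ {0,1}` under a Bernoulli distribution with success
probability `p`:  `f p y = p^y (1-p)^(1-y)`. -/
def bern (p : ℝ) (y : ℕ) : ℝ := p ^ y * (1 - p) ^ (1 - y)

/-- The Kullback–Leibler divergence between Bernoulli(α) and Bernoulli(β). -/
def klBern (α β : ℝ) : ℝ :=
  α * Real.log (α / β) + (1 - α) * Real.log ((1 - α) / (1 - β))

variable {Ω : Type*} {mΩ : MeasurableSpace Ω}

/-- The (unnormalized) log-likelihood statistic for the three-price (exploration) setting:
`L t = ∑_{j=1}^t log (f₁^{a_j}(y_j) / f₀^{a_j}(y_j))`, with `L 0 = 0`. -/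
def LLR3 (q : Fin 2 → Fin 3 → ℝ) (a : ℕ → Ω → Fin 3) (y : ℕ → Ω → ℕ) (t : ℕ) (ω : Ω) : ℝ :=
  ∑ j ∈ Icc 1 t,
    Real.log (bern (q 1 (a j ω)) (y j ω) / bern (q 0 (a j ω)) (y j ω))

/-- A pricing process with three available prices (arms `0`, `1` are the optimal prices of the
two demand models, arm `2` is the exploration price) under true demand model `i`: actions
`a t` are `ℱ (t-1)`-measurable, outcomes `y t ∈ {0,1}` are `ℱ t`-measurable, and the
conditional probability of a successful sale at time `t` given the past is `q i (a t)` a.s. -/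
structure IsPricingProcess3 (μ : Measure Ω) (ℱ : Filtration ℕ mΩ)
    (q : Fin 2 → Fin 3 → ℝ) (i : Fin 2) (a : ℕ → Ω → Fin 3) (y : ℕ → Ω → ℕ) : Prop where
  meas_a : ∀ t, 1 ≤ t → Measurable[ℱ (t - 1)] (a t)
  meas_y : ∀ t, 1 ≤ t → Measurable[ℱ t] (y t)
  y_range : ∀ t, 1 ≤ t → ∀ ω, y t ω = 0 ∨ y t ω = 1
  sale_prob : ∀ t, 1 ≤ t →
    μ[Set.indicator {ω | y t ω = 1} (fun _ => (1 : ℝ)) | ℱ (t - 1)]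
      =ᵐ[μ] fun ω => q i (a t ω)

/-- The XLRT policy with thresholds `η₀, η₁`: for `t ≥ 1`, `a (t+1) = 0` if `L t < -η₀`,
`a (t+1) = 2` (the exploration price) if `-η₀ ≤ L t ≤ η₁`, and `a (t+1) = 1` if `L t > η₁`. -/
def IsXLRT (q : Fin 2 → Fin 3 → ℝ) (a : ℕ → Ω → Fin 3) (y : ℕ → Ω → ℕ) (η₀ η₁ : ℝ) : Prop :=
  ∀ t, 1 ≤ t → ∀ ω,
    a (t + 1) ω =
      if LLR3 q a y t ω < -η₀ then 0 else if LLR3 q a y t ω ≤ η₁ then 2 else 1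

/-
Under model `i`, the one-step log-likelihood ratio of model `i` against model `1 - i` at price
`k` has conditional mean `I(q i k ‖ q (1-i) k) ≥ κ := min_k I(q i k ‖ q (1-i) k)` and takes two
values at distance at most `M - m`. Its centred partial sums therefore form a martingale whose
conditional moment generating function is controlled by Hoeffding's lemma, so they are
sub-Gaussian with variance proxy `t (M - m)² / 4` (Azuma–Hoeffding). XLRT offers a price other
than `i` at time `t + 1` only if the accumulated log-likelihood ratio is at most `ηᵢ` at time `t`,
which forces the centred sum below `-(κ - ηᵢ) t = -a t`; hence that event has probability at most
`exp (-2 a² t / (M - m)²)`.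
Summing the geometric series bounds the expected number of wrong prices by
`1 + (M - m)² / (2 a²)`, and the regret by the largest revenue gap times that number.
-/

open scoped NNReal

lemma two_point_mgf_le {p : ℝ} (hp : p ∈ Set.Icc (0 : ℝ) 1) {x₀ x₁ : ℝ} {w : ℝ≥0}
    (hx : |x₁ - x₀| ≤ w) (s : ℝ) :
    p * exp (s * (x₁ - (p * x₁ + (1 - p) * x₀))) +
        (1 - p) * exp (s * (x₀ - (p * x₁ + (1 - p) * x₀)))
      ≤ exp (((w / 2) ^ 2 : ℝ≥0) * s ^ 2 / 2) := by
  let X : Bool → ℝ := fun b => if b then x₁ else x₀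
  have hX : ∀ᵐ b ∂Ber(true, false, ⟨p, hp⟩), X b ∈ Set.Icc (min x₀ x₁) (max x₀ x₁) :=
    ae_of_all _ fun b => by cases b <;> simp [X]
  have h := (hasSubgaussianMGF_of_mem_Icc (measurable_of_countable X).aemeasurable hX).mgf_le s
  simp only [mgf, integral_bernoulliMeasure, X, smul_eq_mul, if_true, Bool.false_eq_true,
    if_false] at h
  refine h.trans (exp_le_exp.mpr ?_)
  have hw : ‖max x₀ x₁ - min x₀ x₁‖₊ ≤ w := by
    rw [← NNReal.coe_le_coe, coe_nnnorm, Real.norm_eq_abs, max_sub_min_eq_abs']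
    rwa [abs_abs, abs_sub_comm]
  gcongr

lemma sum_Icc_le_of_le_geom {f : ℕ → ℝ} {r : ℝ} (hr0 : 0 ≤ r) (hr1 : r < 1)
    (hf : ∀ t, f (t + 1) ≤ r ^ t) (T : ℕ) : ∑ t ∈ Icc 1 T, f t ≤ 1 / (1 - r) := by
  have hgeom : ∑ t ∈ Icc 1 T, f t ≤ ∑ t ∈ range T, r ^ t := by
    induction T with
    | zero => simp
    | succ T ih => rw [sum_Icc_succ_top (by omega), sum_range_succ]; exact add_le_add ih (hf T)
  have := geom_sum_Ico_le_of_lt_one (m := 0) (n := T) hr0 hr1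
  rw [pow_zero, ← range_eq_Ico] at this
  exact hgeom.trans this

lemma one_div_one_sub_exp_neg_le {c : ℝ} (hc : 0 < c) : 1 / (1 - exp (-c)) ≤ 1 + 1 / c := by
  have hpos : 0 < 1 - exp (-c) := sub_pos.mpr (exp_lt_one_iff.mpr (neg_lt_zero.mpr hc))
  rw [div_le_iff₀ hpos, exp_neg]
  field_simp
  nlinarith [add_one_le_exp c]

lemma sum_sub_le_mul_card_filter {ι β : Type*} [DecidableEq β] (s : Finset ι) (x : ι → β)
    (r : β → ℝ) (k₀ : β) {G : ℝ} (hG : ∀ k, r k₀ - r k ≤ G) :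
    ∑ t ∈ s, (r k₀ - r (x t)) ≤ G * #(s.filter (x · ≠ k₀)) := by
  rw [natCast_card_filter, mul_sum]
  gcongr with t
  split_ifs with h
  · simpa using hG (x t)
  · simp [not_not.mp h]

section

variable {α : Type*} {m mα : MeasurableSpace α} {μ : Measure α}

lemma ProbabilityTheory.HasSubgaussianMGF.add_of_condExp_exp_mul_le (hm : m ≤ mα)
    [IsFiniteMeasure μ] {X Y : α → ℝ} {cX cY : ℝ≥0} {C : ℝ}
    (hX : HasSubgaussianMGF X cX μ) (hXm : StronglyMeasurable[m] X)
    (hYm : StronglyMeasurable Y) (hYC : ∀ ω, |Y ω| ≤ C)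
    (hY : ∀ s, μ[fun ω => exp (s * Y ω) | m] ≤ᵐ[μ] fun _ => exp (cY * s ^ 2 / 2)) :
    HasSubgaussianMGF (X + Y) (cX + cY) μ := by
  have hYint (s : ℝ) : Integrable (fun ω => exp (s * Y ω)) μ :=
    integrable_exp_mul_of_mem_Icc (a := -C) (b := C) hYm.aemeasurable
      (ae_of_all _ fun ω => abs_le.mp (hYC ω))
  have hprod (s : ℝ) : Integrable (fun ω => exp (s * X ω) * exp (s * Y ω)) μ := by
    refine (hX.integrable_exp_mul s).mul_bdd (c := exp (|s| * C))
      (continuous_exp.comp_stronglyMeasurable (hYm.const_mul s)).aestronglyMeasurable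
      (ae_of_all _ fun ω => ?_)
    rw [Real.norm_of_nonneg (exp_pos _).le, exp_le_exp]
    calc s * Y ω ≤ |s| * |Y ω| := (le_abs_self _).trans (abs_mul _ _).le
      _ ≤ |s| * C := by gcongr; exact hYC ω
  have hsplit (s : ℝ) :
      (fun ω => exp (s * (X + Y) ω)) = fun ω => exp (s * X ω) * exp (s * Y ω) := by
    ext ω; rw [Pi.add_apply, mul_add, exp_add]
  have hpull (s : ℝ) : μ[fun ω => exp (s * X ω) * exp (s * Y ω) | m]
      =ᵐ[μ] fun ω => exp (s * X ω) * μ[fun ω => exp (s * Y ω) | m] ω :=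
    condExp_mul_of_stronglyMeasurable_left
      (continuous_exp.comp_stronglyMeasurable (hXm.const_mul s)) (hprod s) (hYint s)
  refine ⟨fun s => hsplit s ▸ hprod s, fun s => ?_⟩
  calc mgf (X + Y) μ s = ∫ ω, exp (s * X ω) * exp (s * Y ω) ∂μ := by rw [mgf, hsplit]
    _ = ∫ ω, μ[fun ω => exp (s * X ω) * exp (s * Y ω) | m] ω ∂μ := (integral_condExp hm).symm
    _ = ∫ ω, exp (s * X ω) * μ[fun ω => exp (s * Y ω) | m] ω ∂μ := integral_congr_ae (hpull s)
    _ ≤ ∫ ω, exp (s * X ω) * exp (cY * s ^ 2 / 2) ∂μ := by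
        refine integral_mono_ae (integrable_condExp.congr (hpull s))
          ((hX.integrable_exp_mul s).mul_const _) ?_
        filter_upwards [hY s] with ω hω
        exact mul_le_mul_of_nonneg_left hω (exp_pos _).le
    _ = mgf X μ s * exp (cY * s ^ 2 / 2) := integral_mul_const _ _
    _ ≤ exp (cX * s ^ 2 / 2) * exp (cY * s ^ 2 / 2) := by
        gcongr; exact hX.mgf_le s
    _ = exp (↑(cX + cY) * s ^ 2 / 2) := by
        rw [← exp_add, NNReal.coe_add]; ring_nf

lemma condExp_piecewise_ae_eq (hm : m ≤ mα) [IsFiniteMeasure μ] {S : Set α}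
    [DecidablePred (· ∈ S)] (hS : MeasurableSet S) {G₀ G₁ P : α → ℝ} {C : ℝ}
    (hG₀ : StronglyMeasurable[m] G₀) (hG₁ : StronglyMeasurable[m] G₁)
    (hG₀C : ∀ ω, |G₀ ω| ≤ C) (hG₁C : ∀ ω, |G₁ ω| ≤ C)
    (hP : μ[S.indicator (fun _ => 1) | m] =ᵐ[μ] P) :
    μ[S.piecewise G₁ G₀ | m] =ᵐ[μ] fun ω => G₀ ω + (G₁ ω - G₀ ω) * P ω := by
  set I : α → ℝ := S.indicator fun _ => 1
  have hpw : S.piecewise G₁ G₀ = G₀ + (G₁ - G₀) * I := by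
    ext ω; by_cases h : ω ∈ S <;> simp [I, h]
  have hI : Integrable I μ := (integrable_const 1).indicator hS
  have hG₀i : Integrable G₀ μ :=
    .of_bound (hG₀.mono hm).aestronglyMeasurable C (ae_of_all _ hG₀C)
  have hdiffC : ∀ ω, ‖(G₁ - G₀) ω‖ ≤ C + C := fun ω =>
    (abs_sub _ _).trans (add_le_add (hG₁C ω) (hG₀C ω))
  have hmul : Integrable ((G₁ - G₀) * I) μ :=
    hI.bdd_mul ((hG₁.sub hG₀).mono hm).aestronglyMeasurable (ae_of_all _ hdiffC)
  rw [hpw]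
  filter_upwards [condExp_add hG₀i hmul m,
    condExp_stronglyMeasurable_mul_of_bound hm (hG₁.sub hG₀) hI _ (ae_of_all _ hdiffC), hP]
    with ω hadd hpull hω
  rw [hadd, Pi.add_apply, condExp_of_stronglyMeasurable hm hG₀ hG₀i, hpull, Pi.mul_apply, hω]
  rfl

/-- Mathlib's Azuma–Hoeffding (via `HasCondSubgaussianMGF`) needs a standard Borel space; this
version works with conditional expectations directly. -/
theorem hasSubgaussianMGF_sum_Icc [IsZeroOrProbabilityMeasure μ] {ℱ : Filtration ℕ mα}
    {D : ℕ → α → ℝ} {C : ℝ} {c : ℝ≥0}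
    (hD : ∀ j, 1 ≤ j → StronglyMeasurable[ℱ j] (D j)) (hDC : ∀ j, 1 ≤ j → ∀ ω, |D j ω| ≤ C)
    (hcond : ∀ t s, μ[fun ω => exp (s * D (t + 1) ω) | ℱ t] ≤ᵐ[μ] fun _ => exp (c * s ^ 2 / 2))
    (t : ℕ) : HasSubgaussianMGF (fun ω => ∑ j ∈ Icc 1 t, D j ω) (t * c) μ := by
  induction t with
  | zero => simp
  | succ t ih =>
    have hsum : StronglyMeasurable[ℱ t] fun ω => ∑ j ∈ Icc 1 t, D j ω :=
      Finset.stronglyMeasurable_fun_sum _ fun j hj =>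
        (hD j (mem_Icc.mp hj).1).mono (ℱ.mono (mem_Icc.mp hj).2)
    convert ih.add_of_condExp_exp_mul_le (ℱ.le t) hsum ((hD (t + 1) t.succ_pos).mono (ℱ.le _))
      (hDC (t + 1) t.succ_pos) (hcond t) using 1
    · ext ω; simp [sum_Icc_succ_top]
    · push_cast; ring

lemma integral_card_filter {ι : Type*} [IsFiniteMeasure μ] (s : Finset ι)
    {P : ι → α → Prop} [∀ t ω, Decidable (P t ω)] (hP : ∀ t ∈ s, MeasurableSet {ω | P t ω}) :
    ∫ ω, (#(s.filter (P · ω)) : ℝ) ∂μ = ∑ t ∈ s, μ.real {ω | P t ω} := by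
  have hind (t : ι) (ω : α) : (if P t ω then (1 : ℝ) else 0) = {ω | P t ω}.indicator 1 ω := by
    simp [Set.indicator]
  simp_rw [natCast_card_filter, hind]
  rw [integral_finsetSum s fun t ht => (integrable_const 1).indicator (hP t ht)]
  exact sum_congr rfl fun t ht => integral_indicator_one (hP t ht)

lemma regret_le_mul_integral_card {β : Type*} [IsProbabilityMeasure μ] [MeasurableSpace β]
    [MeasurableSingletonClass β] [Finite β] [DecidableEq β] {x : ℕ → α → β}
    (hx : ∀ t, 1 ≤ t → Measurable (x t)) (r : β → ℝ) (k₀ : β) {G : ℝ}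
    (hG : ∀ k, r k₀ - r k ≤ G) (T : ℕ) :
    (T : ℝ) * r k₀ - ∫ ω, ∑ t ∈ Icc 1 T, r (x t ω) ∂μ
      ≤ G * ∫ ω, (#((Icc 1 T).filter (fun t => x t ω ≠ k₀)) : ℝ) ∂μ := by
  obtain ⟨C, hC⟩ := Finite.exists_le fun k => |r k|
  have hint (t) (ht : t ∈ Icc 1 T) : Integrable (fun ω => r (x t ω)) μ :=
    .of_bound ((measurable_of_countable r).comp (hx t (mem_Icc.mp ht).1)).aestronglyMeasurable C
      (ae_of_all _ fun ω => hC _)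
  have hcount : Integrable (fun ω => (#((Icc 1 T).filter (fun t => x t ω ≠ k₀)) : ℝ)) μ := by
    simp_rw [natCast_card_filter]
    exact integrable_finsetSum _ fun t ht => .of_bound
      ((measurable_of_countable fun k => if k ≠ k₀ then (1 : ℝ) else 0).comp
        (hx t (mem_Icc.mp ht).1)).aestronglyMeasurable 1
        (ae_of_all _ fun ω => by split_ifs <;> simp)
  calc (T : ℝ) * r k₀ - ∫ ω, ∑ t ∈ Icc 1 T, r (x t ω) ∂μ
      = ∫ ω, ∑ t ∈ Icc 1 T, (r k₀ - r (x t ω)) ∂μ := by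
        rw [integral_finsetSum (f := fun t ω => r k₀ - r (x t ω)) _
          fun t ht => (integrable_const _).sub (hint t ht), integral_finsetSum _ hint,
          ← sum_congr rfl fun t ht => (integral_sub (integrable_const _) (hint t ht)).symm]
        simp [sum_sub_distrib]
    _ ≤ ∫ ω, G * (#((Icc 1 T).filter (fun t => x t ω ≠ k₀)) : ℝ) ∂μ :=
        integral_mono (integrable_finsetSum _ fun t ht => (integrable_const _).sub (hint t ht))
          (hcount.const_mul G) fun ω => sum_sub_le_mul_card_filter _ _ r k₀ hG
    _ = G * ∫ ω, (#((Icc 1 T).filter (fun t => x t ω ≠ k₀)) : ℝ) ∂μ := integral_const_mul _ _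

end

def bernDeviation (p : ℝ) (x : ℕ → ℝ) (n : ℕ) : ℝ := x n - (p * x 1 + (1 - p) * x 0)

lemma abs_bernDeviation_le {p : ℝ} (hp : p ∈ Set.Icc (0 : ℝ) 1) (x : ℕ → ℝ) {n : ℕ}
    (hn : n = 0 ∨ n = 1) : |bernDeviation p x n| ≤ |x 1 - x 0| := by
  rcases hn with rfl | rfl
  · have h : bernDeviation p x 0 = p * (x 0 - x 1) := by unfold bernDeviation; ring
    rw [h, abs_mul, abs_of_nonneg hp.1, abs_sub_comm]
    exact mul_le_of_le_one_left (abs_nonneg _) hp.2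
  · have h : bernDeviation p x 1 = (1 - p) * (x 1 - x 0) := by unfold bernDeviation; ring
    rw [h, abs_mul, abs_of_nonneg (sub_nonneg.mpr hp.2)]
    exact mul_le_of_le_one_left (abs_nonneg _) (sub_le_self _ hp.1)

section PricingProcess

variable {μ : Measure Ω} {ℱ : Filtration ℕ mΩ} {q : Fin 2 → Fin 3 → ℝ} {i : Fin 2}
  {a : ℕ → Ω → Fin 3} {y : ℕ → Ω → ℕ}

lemma IsPricingProcess3.measurable_action (hproc : IsPricingProcess3 μ ℱ q i a y) {t : ℕ}
    (ht : 1 ≤ t) : Measurable (a t) :=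
  (hproc.meas_a t ht).mono (ℱ.le _) le_rfl

lemma IsPricingProcess3.condExp_exp_mul_bernDeviation_le [IsFiniteMeasure μ]
    (hproc : IsPricingProcess3 μ ℱ q i a y) (hq : ∀ k, q i k ∈ Set.Icc (0 : ℝ) 1)
    {u : Fin 3 → ℕ → ℝ} {w : ℝ≥0} (hu : ∀ k, |u k 1 - u k 0| ≤ w) (t : ℕ) (s : ℝ) :
    μ[fun ω => exp (s * bernDeviation (q i (a (t + 1) ω)) (u (a (t + 1) ω)) (y (t + 1) ω))
        | ℱ t] ≤ᵐ[μ] fun _ => exp (((w / 2) ^ 2 : ℝ≥0) * s ^ 2 / 2) := by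
  let G (n : ℕ) (ω : Ω) : ℝ := exp (s * bernDeviation (q i (a (t + 1) ω)) (u (a (t + 1) ω)) n)
  have hG (n : ℕ) : StronglyMeasurable[ℱ t] (G n) :=
    ((measurable_of_countable fun k => exp (s * bernDeviation (q i k) (u k) n)).comp
      (hproc.meas_a (t + 1) t.succ_pos)).stronglyMeasurable
  have hGC (n : ℕ) (hn : n = 0 ∨ n = 1) (ω : Ω) : |G n ω| ≤ exp (|s| * w) := by
    rw [abs_of_pos (exp_pos _), exp_le_exp]
    calc s * bernDeviation _ _ n
        ≤ |s| * |bernDeviation (q i (a (t + 1) ω)) (u (a (t + 1) ω)) n| :=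
          (le_abs_self _).trans (abs_mul _ _).le
      _ ≤ |s| * w := by gcongr; exact (abs_bernDeviation_le (hq _) _ hn).trans (hu _)
  have hS : MeasurableSet {ω | y (t + 1) ω = 1} :=
    (hproc.meas_y (t + 1) t.succ_pos).mono (ℱ.le _) le_rfl (measurableSet_singleton 1)
  have hsel : (fun ω => G (y (t + 1) ω) ω) = {ω | y (t + 1) ω = 1}.piecewise (G 1) (G 0) := by
    ext ω
    rcases hproc.y_range (t + 1) t.succ_pos ω with h | h <;> simp [Set.piecewise, G, h]
  rw [hsel]
  filter_upwards [condExp_piecewise_ae_eq (ℱ.le t) hS (hG 0) (hG 1) (hGC 0 (.inl rfl))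
    (hGC 1 (.inr rfl)) (hproc.sale_prob (t + 1) t.succ_pos)] with ω hω
  rw [hω]
  have := two_point_mgf_le (hq (a (t + 1) ω)) (hu (a (t + 1) ω)) s
  simp only [G, bernDeviation]
  linarith

theorem IsPricingProcess3.hasSubgaussianMGF_sum_bernDeviation [IsProbabilityMeasure μ]
    (hproc : IsPricingProcess3 μ ℱ q i a y) (hq : ∀ k, q i k ∈ Set.Icc (0 : ℝ) 1)
    {u : Fin 3 → ℕ → ℝ} {w : ℝ≥0} (hu : ∀ k, |u k 1 - u k 0| ≤ w) (t : ℕ) :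
    HasSubgaussianMGF
      (fun ω => ∑ j ∈ Icc 1 t, bernDeviation (q i (a j ω)) (u (a j ω)) (y j ω))
      (t * (w / 2) ^ 2) μ := by
  refine hasSubgaussianMGF_sum_Icc (C := w) (fun j hj => ?_) (fun j hj ω => ?_)
    (hproc.condExp_exp_mul_bernDeviation_le hq hu) t
  · have ha : Measurable[ℱ j] (a j) := (hproc.meas_a j hj).mono (ℱ.mono (Nat.sub_le j 1)) le_rfl
    exact ((measurable_of_countable fun p : Fin 3 × ℕ => bernDeviation (q i p.1) (u p.1) p.2).comp
      (ha.prodMk (hproc.meas_y j hj))).stronglyMeasurable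
  · exact (abs_bernDeviation_le (hq _) _ (hproc.y_range j hj ω)).trans (hu _)

end PricingProcess

def stepLLR (q : Fin 2 → Fin 3 → ℝ) (i : Fin 2) (k : Fin 3) (n : ℕ) : ℝ :=
  Real.log (bern (q i k) n / bern (q (1 - i) k) n)

lemma bernDeviation_stepLLR (q : Fin 2 → Fin 3 → ℝ) (i : Fin 2) (k : Fin 3) (n : ℕ) :
    bernDeviation (q i k) (stepLLR q i k) n = stepLLR q i k n - klBern (q i k) (q (1 - i) k) := by
  simp [bernDeviation, stepLLR, klBern, bern]

lemma stepLLR_zero (q : Fin 2 → Fin 3 → ℝ) (k : Fin 3) (n : ℕ) :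
    stepLLR q 0 k n = -stepLLR q 1 k n := by
  rw [stepLLR, stepLLR, ← Real.log_inv, inv_div]
  rfl

lemma stepLLR_ne_of_ne {q : Fin 2 → Fin 3 → ℝ} (hq : ∀ i k, q i k ∈ Set.Ioo (0 : ℝ) 1)
    {k : Fin 3} (hk : q 0 k ≠ q 1 k) : stepLLR q 1 k 1 ≠ stepLLR q 1 k 0 := by
  have h0 := hq 0 k
  have h1 := hq 1 k
  intro h
  simp only [stepLLR, bern, pow_one, pow_zero, one_mul, mul_one, tsub_zero, tsub_self] at h
  have := Real.log_injOn_pos (div_pos h1.1 h0.1) (div_pos (sub_pos.mpr h1.2) (sub_pos.mpr h0.2)) h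
  rw [div_eq_div_iff h0.1.ne' (sub_pos.mpr h0.2).ne'] at this
  exact hk (by linarith)

lemma lt_of_stepLLR_mem_Icc {q : Fin 2 → Fin 3 → ℝ} (hq : ∀ i k, q i k ∈ Set.Ioo (0 : ℝ) 1)
    {k : Fin 3} (hk : q 0 k ≠ q 1 k) {m M : ℝ} (h : ∀ n : Fin 2, stepLLR q 1 k n ∈ Set.Icc m M) :
    m < M := by
  have h0 := h 0
  have h1 := h 1
  simp only [Fin.val_zero, Fin.val_one, Set.mem_Icc] at h0 h1
  by_contra hle
  exact stepLLR_ne_of_ne hq hk (by linarith)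

lemma abs_stepLLR_sub_le {q : Fin 2 → Fin 3 → ℝ} {m M : ℝ}
    (h : ∀ k (n : Fin 2), stepLLR q 1 k n ∈ Set.Icc m M) (i : Fin 2) (k : Fin 3) :
    |stepLLR q i k 1 - stepLLR q i k 0| ≤ M - m := by
  have h0 := h k 0
  have h1 := h k 1
  simp only [Fin.val_zero, Fin.val_one, Set.mem_Icc] at h0 h1
  obtain rfl | rfl : i = 0 ∨ i = 1 := by fin_cases i <;> simp
  · rw [stepLLR_zero, stepLLR_zero]
    exact abs_le.mpr ⟨by linarith, by linarith⟩
  · exact abs_le.mpr ⟨by linarith, by linarith⟩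

section XLRT

variable {μ : Measure Ω} {ℱ : Filtration ℕ mΩ} {q : Fin 2 → Fin 3 → ℝ} {i : Fin 2}
  {a : ℕ → Ω → Fin 3} {y : ℕ → Ω → ℕ} {η₀ η₁ : ℝ}

lemma IsXLRT.sum_stepLLR_le (hpol : IsXLRT q a y η₀ η₁) (hη : -η₀ ≤ η₁) {t : ℕ} (ht : 1 ≤ t)
    {ω : Ω} (hne : a (t + 1) ω ≠ i.castSucc) :
    ∑ j ∈ Icc 1 t, stepLLR q i (a j ω) (y j ω) ≤ if i = 0 then η₀ else η₁ := by
  have hL := hpol t ht ω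
  have hLLR : LLR3 q a y t ω = ∑ j ∈ Icc 1 t, stepLLR q 1 (a j ω) (y j ω) := rfl
  obtain rfl | rfl : i = 0 ∨ i = 1 := by fin_cases i <;> simp
  · simp only [stepLLR_zero, sum_neg_distrib, ← hLLR, if_true]
    by_contra h
    exact hne (by rw [hL, if_pos (by linarith)]; rfl)
  · simp only [← hLLR, one_ne_zero, if_false]
    by_contra h
    exact hne (by rw [hL, if_neg (by linarith), if_neg (by linarith)]; rfl)

theorem IsXLRT.measureReal_ne_le [IsProbabilityMeasure μ] (hpol : IsXLRT q a y η₀ η₁)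
    (hproc : IsPricingProcess3 μ ℱ q i a y) (hq : ∀ k, q i k ∈ Set.Icc (0 : ℝ) 1) {w : ℝ}
    (hw0 : 0 < w) (hw : ∀ k, |stepLLR q i k 1 - stepLLR q i k 0| ≤ w) (hη₀ : 0 ≤ η₀)
    (hη₁ : 0 ≤ η₁) {δ : ℝ}
    (hκ : ∀ k, δ + (if i = 0 then η₀ else η₁) ≤ klBern (q i k) (q (1 - i) k))
    (hδ : 0 ≤ δ) (t : ℕ) :
    μ.real {ω | a (t + 1) ω ≠ i.castSucc} ≤ exp (-(2 * δ ^ 2 / w ^ 2)) ^ t := by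
  rcases Nat.eq_zero_or_pos t with rfl | ht
  · rw [pow_zero]
    exact measureReal_le_one
  have hw' (k : Fin 3) : |stepLLR q i k 1 - stepLLR q i k 0| ≤ w.toNNReal :=
    (hw k).trans (Real.le_coe_toNNReal w)
  refine (measureReal_mono (fun ω hne => ?_) (measure_ne_top _ _)).trans
    (((hproc.hasSubgaussianMGF_sum_bernDeviation hq hw' t).neg.measure_ge_le
      (ε := δ * t) (by positivity)).trans_eq ?_)
  · have hllr := hpol.sum_stepLLR_le (by linarith) ht hne
    have hkl : ∑ j ∈ Icc 1 t, (δ + if i = 0 then η₀ else η₁)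
        ≤ ∑ j ∈ Icc 1 t, klBern (q i (a j ω)) (q (1 - i) (a j ω)) :=
      sum_le_sum fun j _ => hκ _
    simp only [sum_const, Nat.card_Icc, add_tsub_cancel_right, nsmul_eq_mul] at hkl
    simp only [Set.mem_ofPred_eq, Pi.neg_apply, bernDeviation_stepLLR, sum_sub_distrib]
    have ht' : (1 : ℝ) ≤ t := by exact_mod_cast ht
    have hη : 0 ≤ if i = 0 then η₀ else η₁ := by split_ifs <;> assumption
    nlinarith
  · rw [← exp_nat_mul]
    congr 1
    push_cast [Real.coe_toNNReal _ hw0.le]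
    field_simp

theorem IsXLRT.integral_card_ne_le [IsProbabilityMeasure μ] (hpol : IsXLRT q a y η₀ η₁)
    (hproc : IsPricingProcess3 μ ℱ q i a y) (hq : ∀ k, q i k ∈ Set.Icc (0 : ℝ) 1) {w : ℝ}
    (hw0 : 0 < w) (hw : ∀ k, |stepLLR q i k 1 - stepLLR q i k 0| ≤ w) (hη₀ : 0 ≤ η₀)
    (hη₁ : 0 ≤ η₁) {δ : ℝ}
    (hκ : ∀ k, δ + (if i = 0 then η₀ else η₁) ≤ klBern (q i k) (q (1 - i) k))
    (hδ : 0 < δ) (T : ℕ) :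
    ∫ ω, (#((Icc 1 T).filter (fun t => a t ω ≠ i.castSucc)) : ℝ) ∂μ
      ≤ 1 + w ^ 2 / (2 * δ ^ 2) := by
  have hc : 0 < 2 * δ ^ 2 / w ^ 2 := by positivity
  rw [integral_card_filter (P := fun t ω => a t ω ≠ i.castSucc) _ fun t ht =>
    hproc.measurable_action (mem_Icc.mp ht).1 (measurableSet_singleton _).compl]
  calc _ ≤ 1 / (1 - exp (-(2 * δ ^ 2 / w ^ 2))) :=
        sum_Icc_le_of_le_geom (exp_pos _).le (exp_lt_one_iff.mpr (neg_lt_zero.mpr hc))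
          (hpol.measureReal_ne_le hproc hq hw0 hw hη₀ hη₁ hκ hδ.le) T
    _ ≤ 1 + 1 / (2 * δ ^ 2 / w ^ 2) := one_div_one_sub_exp_neg_le hc
    _ = 1 + w ^ 2 / (2 * δ ^ 2) := by rw [one_div_div]

end XLRT

theorem xlrt_bounded_regret_general
    (μ : Measure Ω) [IsProbabilityMeasure μ] (ℱ : Filtration ℕ mΩ)
    (q : Fin 2 → Fin 3 → ℝ)
    (hq : ∀ i k, q i k ∈ Set.Ioo (0 : ℝ) 1)
    (hni : ∀ k, q 0 k ≠ q 1 k)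
    (i : Fin 2) (a : ℕ → Ω → Fin 3) (y : ℕ → Ω → ℕ)
    (η₀ η₁ : ℝ) (hη₀0 : 0 ≤ η₀) (hη₁0 : 0 ≤ η₁)
    (hη₁ : η₁ < Finset.univ.inf' ⟨0, Finset.mem_univ 0⟩
      (fun k : Fin 3 => klBern (q 1 k) (q 0 k)))
    (hη₀ : η₀ < Finset.univ.inf' ⟨0, Finset.mem_univ 0⟩
      (fun k : Fin 3 => klBern (q 0 k) (q 1 k)))
    (hproc : IsPricingProcess3 μ ℱ q i a y)
    (hpol : IsXLRT q a y η₀ η₁)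
    (r : Fin 2 → Fin 3 → ℝ)
    (aa m M : ℝ)
    (haa : aa = Finset.univ.inf' ⟨0, Finset.mem_univ 0⟩
        (fun k : Fin 3 => klBern (q i k) (q (1 - i) k)) - (if i = 0 then η₀ else η₁))
    (hm : m = Finset.univ.inf' ⟨(0, 0), Finset.mem_univ _⟩
      (fun p : Fin 3 × Fin 2 =>
        Real.log (bern (q 1 p.1) (p.2 : ℕ) / bern (q 0 p.1) (p.2 : ℕ))))
    (hM : M = Finset.univ.sup' ⟨(0, 0), Finset.mem_univ _⟩
      (fun p : Fin 3 × Fin 2 =>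
        Real.log (bern (q 1 p.1) (p.2 : ℕ) / bern (q 0 p.1) (p.2 : ℕ)))) :
    0 < aa ∧
      (∀ T : ℕ, 1 ≤ T →
        (∫ ω, (((Finset.Icc 1 T).filter (fun t => a t ω ≠ i.castSucc)).card : ℝ) ∂μ)
          ≤ 1 + (M - m) ^ 2 / (2 * aa ^ 2)) ∧
      ∃ B : ℝ, ∀ T : ℕ, 1 ≤ T →
        (T : ℝ) * r i i.castSucc - ∫ ω, ∑ t ∈ Finset.Icc 1 T, r i (a t ω) ∂μ ≤ B := by
  have hqI (k : Fin 3) : q i k ∈ Set.Icc (0 : ℝ) 1 := Set.Ioo_subset_Icc_self (hq i k)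
  have hllr (k : Fin 3) (n : Fin 2) : stepLLR q 1 k n ∈ Set.Icc m M :=
    ⟨hm ▸ inf'_le (fun p : Fin 3 × Fin 2 => stepLLR q 1 p.1 p.2) (mem_univ (k, n)),
      hM ▸ le_sup' (fun p : Fin 3 × Fin 2 => stepLLR q 1 p.1 p.2) (mem_univ (k, n))⟩
  have hmM : 0 < M - m := sub_pos.mpr (lt_of_stepLLR_mem_Icc hq (hni 0) (hllr 0))
  have hκ (k : Fin 3) : aa + (if i = 0 then η₀ else η₁) ≤ klBern (q i k) (q (1 - i) k) := by
    rw [haa, sub_add_cancel]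
    exact inf'_le _ (mem_univ k)
  have haa0 : 0 < aa := by
    rw [haa]
    obtain rfl | rfl : i = 0 ∨ i = 1 := by fin_cases i <;> simp
    · simpa using hη₀
    · simpa using hη₁
  have hcount (T : ℕ) := hpol.integral_card_ne_le hproc hqI hmM (abs_stepLLR_sub_le hllr i)
    hη₀0 hη₁0 hκ haa0 T
  obtain ⟨G, hG⟩ := Finite.exists_le fun k => r i i.castSucc - r i k
  exact ⟨haa0, fun T _ => hcount T, G * (1 + (M - m) ^ 2 / (2 * aa ^ 2)), fun T _ =>
    (regret_le_mul_integral_card (fun t => hproc.measurable_action) (r i) i.castSucc hG T).trans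
      (mul_le_mul_of_nonneg_left (hcount T) (by simpa using hG i.castSucc))⟩

/-- **Theorem 2 (XLRT achieves bounded regret).** If the true demand model is `i` and the
thresholds satisfy `η₁ < min_k I(q 1 k ‖ q 0 k)`, `η₀ < min_k I(q 0 k ‖ q 1 k)`, then
`a = min_k I(q i k ‖ q (1-i) k) − ηᵢ > 0`, the expected number of times `t ∈ {1,…,T}` at
which the XLRT policy does not select arm `i` is at most `1 + (M−m)²/(2a²)` uniformly in the
horizon `T`, and consequently the regret is bounded by a constant independent of `T`. -/
theorem xlrt_bounded_regret
    (μ : Measure Ω) [IsProbabilityMeasure μ] (ℱ : Filtration ℕ mΩ)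
    (q : Fin 2 → Fin 3 → ℝ)
    (hq : ∀ i k, q i k ∈ Set.Ioo (0 : ℝ) 1)
    (hni : ∀ k, q 0 k ≠ q 1 k)
    (i : Fin 2) (a : ℕ → Ω → Fin 3) (y : ℕ → Ω → ℕ)
    (η₀ η₁ : ℝ) (hη₀0 : 0 ≤ η₀) (hη₁0 : 0 ≤ η₁)
    (hη₁ : η₁ < Finset.univ.inf' ⟨0, Finset.mem_univ 0⟩
      (fun k : Fin 3 => klBern (q 1 k) (q 0 k)))
    (hη₀ : η₀ < Finset.univ.inf' ⟨0, Finset.mem_univ 0⟩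
      (fun k : Fin 3 => klBern (q 0 k) (q 1 k)))
    (hproc : IsPricingProcess3 μ ℱ q i a y)
    (hpol : IsXLRT q a y η₀ η₁)
    (r : Fin 2 → Fin 3 → ℝ)
    (hr : ∀ k, r i k ≤ r i i.castSucc)
    (aa m M : ℝ)
    (haa : aa = Finset.univ.inf' ⟨0, Finset.mem_univ 0⟩
        (fun k : Fin 3 => klBern (q i k) (q (1 - i) k)) - (if i = 0 then η₀ else η₁))
    (hm : m = Finset.univ.inf' ⟨(0, 0), Finset.mem_univ _⟩
      (fun p : Fin 3 × Fin 2 =>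
        Real.log (bern (q 1 p.1) (p.2 : ℕ) / bern (q 0 p.1) (p.2 : ℕ))))
    (hM : M = Finset.univ.sup' ⟨(0, 0), Finset.mem_univ _⟩
      (fun p : Fin 3 × Fin 2 =>
        Real.log (bern (q 1 p.1) (p.2 : ℕ) / bern (q 0 p.1) (p.2 : ℕ)))) :
    0 < aa ∧
      (∀ T : ℕ, 1 ≤ T →
        (∫ ω, (((Finset.Icc 1 T).filter (fun t => a t ω ≠ i.castSucc)).card : ℝ) ∂μ)
          ≤ 1 + (M - m) ^ 2 / (2 * aa ^ 2)) ∧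
      ∃ B : ℝ, ∀ T : ℕ, 1 ≤ T →
        (T : ℝ) * r i i.castSucc - ∫ ω, ∑ t ∈ Finset.Icc 1 T, r i (a t ω) ∂μ ≤ B :=
  xlrt_bounded_regret_general μ ℱ q hq hni i a y η₀ η₁ hη₀0 hη₁0 hη₁ hη₀ hproc hpol r aa m M haa hm
    hM
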